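/- arXiv:1910.03113 — 2 statements merged into one kernel-verified Lean document; each statement's English description precedes it below -/
import Mathlib

section
/- Let X be a topological space and let T be a map sending continuous functions X → ℝ to continuous functions X → ℝ such that: (i) T(f + g) = T f + T g for all continuous f, g; (ii) tsupport (T f) ⊆ tsupport f for all continuous f; and (iii) T maps the constant function 1 to the constant function 1. Let (ψ_s)_{s ∈ ι} be a family of continuous functions X → ℝ such that the family of closed supports (tsupport ψ_s)_{s ∈ ι} is locally finite and ∑_s ψ_s p = 1 for every p ∈ X. Then the family (tsupport (T ψ_s))_{s ∈ ι} is locally finite and ∑_s (T ψ_s) p = 1 for every p ∈ X. -/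
/-- An additive, support-preserving, unital operator on continuous real functions
maps a (locally finite, summing to one) partition of unity to another partition of
unity subordinate to the same cover. -/
theorem operator_maps_partition_of_unity {X : Type*} [TopologicalSpace X] {ι : Type*}
    (T : (X → ℝ) → (X → ℝ))
    (hTcont : ∀ f : X → ℝ, Continuous f → Continuous (T f))
    (hTadd : ∀ f g : X → ℝ, Continuous f → Continuous g → T (f + g) = T f + T g)
    (hTsupp : ∀ f : X → ℝ, Continuous f → tsupport (T f) ⊆ tsupport f)
    (hTone : T (fun _ => (1 : ℝ)) = fun _ => (1 : ℝ))
    (ψ : ι → X → ℝ) (hψcont : ∀ s, Continuous (ψ s))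
    (hlf : LocallyFinite fun s => tsupport (ψ s))
    (hsum : ∀ p : X, ∑ᶠ s, ψ s p = 1) :
    (LocallyFinite fun s => tsupport (T (ψ s))) ∧ ∀ p : X, ∑ᶠ s, T (ψ s) p = 1 := by
  classical
  have hT0 : T 0 = 0 := by
    have h := hTadd 0 0 continuous_zero continuous_zero
    simp only [add_zero] at h
    funext x
    have := congrFun h x
    simp only [Pi.add_apply, Pi.zero_apply] at this ⊢
    linarith
  have hlocal : ∀ (f g : X → ℝ), Continuous f → Continuous g → ∀ V : Set X, IsOpen V →
      (∀ q ∈ V, f q = g q) → ∀ q ∈ V, T f q = T g q := by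
    intro f g hf hg V hV hfg q hq
    have hd : Continuous (f - g) := hf.sub hg
    have h1 : T f = T (f - g) + T g := by
      have h := hTadd (f - g) g hd hg
      simpa using h
    have hsupp : tsupport (f - g) ⊆ Vᶜ := by
      apply closure_minimal _ hV.isClosed_compl
      intro x hx hxV
      apply hx
      simp [hfg x hxV]
    have hz : T (f - g) q = 0 :=
      image_eq_zero_of_notMem_tsupport fun h => hsupp (hTsupp _ hd h) hq
    rw [h1]
    simp [hz]
  have hc : ∀ F : Finset ι, Continuous (∑ s ∈ F, ψ s) := by
    intro F
    rw [show (∑ s ∈ F, ψ s) = fun x => ∑ s ∈ F, ψ s x from funext fun x => Finset.sum_apply ..]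
    exact continuous_finset_sum _ fun i _ => hψcont i
  have hfinsum : ∀ F : Finset ι, T (∑ s ∈ F, ψ s) = ∑ s ∈ F, T (ψ s) := by
    intro F
    induction F using Finset.induction with
    | empty => simpa using hT0
    | insert _ _ h ih =>
        rw [Finset.sum_insert h, Finset.sum_insert h, hTadd _ _ (hψcont _) (hc _), ih]
  refine ⟨hlf.subset fun s => hTsupp _ (hψcont s), ?_⟩
  intro p
  obtain ⟨U, hU, hfin⟩ := hlf p
  obtain ⟨V, hVU, hVopen, hpV⟩ := mem_nhds_iff.mp hU
  set F := hfin.toFinset with hFdef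
  have hF : ∀ q ∈ V, ∀ s, ψ s q ≠ 0 → s ∈ F := by
    intro q hq s hs
    rw [hFdef, Set.Finite.mem_toFinset]
    exact ⟨q, subset_closure hs, hVU hq⟩
  have hg1 : ∀ q ∈ V, (∑ s ∈ F, ψ s) q = 1 := by
    intro q hq
    rw [Finset.sum_apply, ← hsum q]
    exact (finsum_eq_finset_sum_of_support_subset _ (fun s hs => hF q hq s hs)).symm
  have hTz : ∀ s, s ∉ F → T (ψ s) p = 0 := by
    intro s hs
    apply image_eq_zero_of_notMem_tsupport
    intro hmem
    apply hs
    rw [hFdef, Set.Finite.mem_toFinset]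
    exact ⟨p, hTsupp _ (hψcont s) hmem, hVU hpV⟩
  calc ∑ᶠ s, T (ψ s) p = ∑ s ∈ F, T (ψ s) p :=
        finsum_eq_finset_sum_of_support_subset _ (fun s hs => by
          by_contra h; exact hs (hTz s h))
    _ = T (∑ s ∈ F, ψ s) p := by rw [hfinsum F, Finset.sum_apply]
    _ = 1 := by
        have := hlocal (∑ s ∈ F, ψ s) (fun _ => 1) (hc F) continuous_const V hVopen hg1 p hpV
        rw [this, hTone]
end

section
/- Let n ∈ ℕ, E = Fin n → ℝ, U ⊆ E open, and let φ, σ : E → E satisfy σ (φ x) = x for all x ∈ U; assume V = φ '' U is open, φ is C² on U (ContDiffOn ℝ 2 φ U), σ is differentiable at every point of V, and X, Y : E → E are vector fields differentiable at every point of U. Let Γ' : E → Fin n → Fin n → Fin n → ℝ be coefficient functions, with associated connection operator (∇'_{X'} Y')(q) c = fderiv ℝ Y' q (X' q) c + ∑_{m,o} Γ' q c m o * X' q m * Y' q o. Define the pushforward vector fields X̃ q = fderiv ℝ φ (σ q) (X (σ q)) and Ỹ q = fderiv ℝ φ (σ q) (Y (σ q)). Then for every p ∈ U: fderiv ℝ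 σ (φ p) ((∇'_{X̃} Ỹ)(φ p)) = (∇_X Y)(p), where ∇ is the connection operator associated to the coefficients Γ p c a b = ∑_{l,m,o} (fderiv ℝ σ (φ p) (e l) c) * (fderiv ℝ φ p (e a) m) * (fderiv ℝ φ p (e b) o) * Γ' (φ p) l m o + ∑_l (iteratedFDeriv ℝ 2 φ p ![e a, e b] l) * (fderiv ℝ σ (φ p) (e l) c), with e i the i-th standard basis vector of E. That is, under a C² change of coordinates the coefficients of an affine connection transform by the law Γ^c_{ab} = ∑_{l,m,o} (∂x^c/∂y^l)(∂y^m/∂x^a)(∂y^o/∂x^b) Γ'^l_{mo} + ∑_l (∂²y^l/∂x^a ∂x^b)(∂x^c/∂y^l). -/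
open scoped BigOperators

/-- The connection operator on `ℝⁿ` associated to a family of coefficient
functions `Γ`. -/
noncomputable def connOp (n : ℕ) (Γ : (Fin n → ℝ) → Fin n → Fin n → Fin n → ℝ)
    (X Y : (Fin n → ℝ) → (Fin n → ℝ)) : (Fin n → ℝ) → (Fin n → ℝ) :=
  fun p c => fderiv ℝ Y p (X p) c + ∑ a, ∑ b, Γ p c a b * X p a * Y p b

private lemma pi_expand {n : ℕ} (v : Fin n → ℝ) :
    v = ∑ i, v i • (Pi.single i 1 : Fin n → ℝ) := by
  funext j
  simp [Finset.sum_apply, Pi.single_apply, eq_comm]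

private lemma clm_expand {n : ℕ} (L : (Fin n → ℝ) →L[ℝ] (Fin n → ℝ)) (v : Fin n → ℝ)
    (c : Fin n) : L v c = ∑ i, v i * L (Pi.single i 1) c := by
  conv_lhs => rw [pi_expand v]
  rw [map_sum]
  simp [Finset.sum_apply]

private lemma sum_comm5 {ι : Type*} [Fintype ι] (f : ι → ι → ι → ι → ι → ℝ) :
    ∑ l, ∑ m, ∑ o, ∑ a, ∑ b, f l m o a b = ∑ a, ∑ b, ∑ l, ∑ m, ∑ o, f l m o a b := by
  conv_lhs => enter [2, l, 2, m]; rw [Finset.sum_comm]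
  conv_lhs => enter [2, l]; rw [Finset.sum_comm]
  rw [Finset.sum_comm]
  conv_lhs => enter [2, a, 2, l, 2, m]; rw [Finset.sum_comm]
  conv_lhs => enter [2, a, 2, l]; rw [Finset.sum_comm]
  conv_lhs => enter [2, a]; rw [Finset.sum_comm]

private lemma algB {ι : Type*} [Fintype ι] (G : ι → ι → ι → ℝ) (Dc Xv Yv : ι → ℝ)
    (DA DB : ι → ι → ℝ) :
    ∑ l, (∑ m, ∑ o, G l m o * (∑ a, Xv a * DA a m) * (∑ b, Yv b * DB b o)) * Dc l
      = ∑ a, ∑ b, (∑ l, ∑ m, ∑ o, Dc l * DA a m * DB b o * G l m o) * Xv a * Yv b := by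
  simp only [Finset.sum_mul, Finset.mul_sum]
  rw [sum_comm5]
  rw [Finset.sum_comm]
  repeat' refine Finset.sum_congr rfl fun _ _ => ?_
  ring

/-- Change-of-coordinates formula for the coefficients of an affine connection:
under a C² change of coordinates `φ` (with local inverse `σ`), pulling back the
connection with coefficients `Γ'` yields the connection whose coefficients are given by
`Γ^c_{ab} = ∑_{l,m,o} (∂x^c/∂y^l)(∂y^m/∂x^a)(∂y^o/∂x^b) Γ'^l_{mo}
  + ∑_l (∂²y^l/∂x^a∂x^b)(∂x^c/∂y^l)`. -/
theorem connOp_change_of_coordinates (n : ℕ)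
    (φ σ : (Fin n → ℝ) → (Fin n → ℝ)) (U : Set (Fin n → ℝ))
    (hU : IsOpen U) (hσφ : ∀ x ∈ U, σ (φ x) = x)
    (hV : IsOpen (φ '' U))
    (hφ : ContDiffOn ℝ 2 φ U)
    (hσ : ∀ q ∈ φ '' U, DifferentiableAt ℝ σ q)
    (X Y : (Fin n → ℝ) → (Fin n → ℝ))
    (hX : ∀ p ∈ U, DifferentiableAt ℝ X p)
    (hY : ∀ p ∈ U, DifferentiableAt ℝ Y p)
    (Γ' : (Fin n → ℝ) → Fin n → Fin n → Fin n → ℝ) :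
    ∀ p ∈ U,
      fderiv ℝ σ (φ p)
        (connOp n Γ'
          (fun q => fderiv ℝ φ (σ q) (X (σ q)))
          (fun q => fderiv ℝ φ (σ q) (Y (σ q)))
          (φ p))
      = connOp n
          (fun p c a b =>
            (∑ l, ∑ m, ∑ o,
              fderiv ℝ σ (φ p) (Pi.single l 1) c *
              fderiv ℝ φ p (Pi.single a 1) m *
              fderiv ℝ φ p (Pi.single b 1) o * Γ' (φ p) l m o) +
            ∑ l, iteratedFDeriv ℝ 2 φ p ![Pi.single a 1, Pi.single b 1] l *
              fderiv ℝ σ (φ p) (Pi.single l 1) c)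
          X Y p := by
  intro p hp
  classical
  have hqV : φ p ∈ φ '' U := ⟨p, hp, rfl⟩
  have hσp : σ (φ p) = p := hσφ p hp
  have hφat : ContDiffAt ℝ 2 φ p := hφ.contDiffAt (hU.mem_nhds hp)
  have hφp : DifferentiableAt ℝ φ p := hφat.differentiableAt (by norm_num)
  have hφ' : DifferentiableAt ℝ (fderiv ℝ φ) p :=
    (hφat.fderiv_right (m := 1) (le_refl 2)).differentiableAt one_ne_zero
  have hσq : DifferentiableAt ℝ σ (φ p) := hσ _ hqV
  have hYp := hY p hp
  have hg : DifferentiableAt ℝ (fun x => fderiv ℝ φ x (Y x)) p := hφ'.clm_apply hYp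
  have hgσ : DifferentiableAt ℝ (fun x => fderiv ℝ φ x (Y x)) (σ (φ p)) := by rw [hσp]; exact hg
  have hid : (fderiv ℝ σ (φ p)).comp (fderiv ℝ φ p) = ContinuousLinearMap.id ℝ _ := by
    have h1 : fderiv ℝ (σ ∘ φ) p = (fderiv ℝ σ (φ p)).comp (fderiv ℝ φ p) :=
      fderiv_comp p hσq hφp
    have h2 : (σ ∘ φ) =ᶠ[nhds p] id := by
      filter_upwards [hU.mem_nhds hp] with x hx using hσφ x hx
    rw [← h1, h2.fderiv_eq, fderiv_id]
  have hinv : ∀ v, fderiv ℝ σ (φ p) (fderiv ℝ φ p v) = v := fun v => by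
    have := congrArg (fun L => L v) hid
    simpa using this
  have hYt : fderiv ℝ (fun q => fderiv ℝ φ (σ q) (Y (σ q))) (φ p)
      = (fderiv ℝ (fun x => fderiv ℝ φ x (Y x)) p).comp (fderiv ℝ σ (φ p)) := by
    have heq : (fun q => fderiv ℝ φ (σ q) (Y (σ q))) = (fun x => fderiv ℝ φ x (Y x)) ∘ σ := rfl
    rw [heq, fderiv_comp (φ p) hgσ hσq, hσp]
  have hXt : fderiv ℝ φ (σ (φ p)) (X (σ (φ p))) = fderiv ℝ φ p (X p) := by rw [hσp]
  have hA : fderiv ℝ (fun q => fderiv ℝ φ (σ q) (Y (σ q))) (φ p)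
        (fderiv ℝ φ (σ (φ p)) (X (σ (φ p))))
      = fderiv ℝ φ p (fderiv ℝ Y p (X p)) + fderiv ℝ (fderiv ℝ φ) p (X p) (Y p) := by
    rw [hYt, hXt]
    simp only [ContinuousLinearMap.comp_apply]
    rw [hinv, fderiv_clm_apply hφ' hYp]
    simp [ContinuousLinearMap.add_apply, ContinuousLinearMap.comp_apply,
      ContinuousLinearMap.flip_apply]
  have hBexp : fderiv ℝ (fderiv ℝ φ) p (X p) (Y p)
      = ∑ a, ∑ b, (X p a * Y p b) • fderiv ℝ (fderiv ℝ φ) p (Pi.single a 1) (Pi.single b 1) := by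
    conv_lhs => rw [pi_expand (X p), pi_expand (Y p)]
    rw [map_sum]
    simp only [map_smul, ContinuousLinearMap.sum_apply, ContinuousLinearMap.smul_apply,
      map_sum, map_smul, Finset.smul_sum, smul_smul]
    rw [Finset.sum_comm]
    exact Finset.sum_congr rfl fun a _ => Finset.sum_congr rfl fun b _ => by
      rw [mul_comm (Y p b) (X p a)]
  have hAc : ∀ c, fderiv ℝ σ (φ p) (fderiv ℝ (fderiv ℝ φ) p (X p) (Y p)) c
      = ∑ a, ∑ b, (∑ l, iteratedFDeriv ℝ 2 φ p ![Pi.single a 1, Pi.single b 1] l *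
          fderiv ℝ σ (φ p) (Pi.single l 1) c) * X p a * Y p b := by
    intro c
    rw [hBexp, map_sum]
    simp only [map_sum, map_smul, Finset.sum_apply, Pi.smul_apply, smul_eq_mul]
    refine Finset.sum_congr rfl fun a _ => Finset.sum_congr rfl fun b _ => ?_
    rw [clm_expand]
    have h2 : ∀ l, fderiv ℝ (fderiv ℝ φ) p (Pi.single a 1) (Pi.single b 1) l
        = iteratedFDeriv ℝ 2 φ p ![Pi.single a 1, Pi.single b 1] l := by
      intro l
      rw [iteratedFDeriv_two_apply]
      simp
    simp only [h2]
    rw [Finset.sum_mul, Finset.sum_mul, Finset.mul_sum]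
    exact Finset.sum_congr rfl fun l _ => by ring
  have hW : ∀ c, fderiv ℝ σ (φ p)
      (fun c' => ∑ a, ∑ b, Γ' (φ p) c' a b * fderiv ℝ φ (σ (φ p)) (X (σ (φ p))) a *
          fderiv ℝ φ (σ (φ p)) (Y (σ (φ p))) b) c
      = ∑ a, ∑ b, (∑ l, ∑ m, ∑ o, fderiv ℝ σ (φ p) (Pi.single l 1) c *
          fderiv ℝ φ p (Pi.single a 1) m * fderiv ℝ φ p (Pi.single b 1) o *
          Γ' (φ p) l m o) * X p a * Y p b := by
    intro c
    rw [clm_expand]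
    simp only [hσp]
    have hx : ∀ m, fderiv ℝ φ p (X p) m = ∑ a, X p a * fderiv ℝ φ p (Pi.single a 1) m :=
      fun m => clm_expand _ _ m
    have hy : ∀ o, fderiv ℝ φ p (Y p) o = ∑ b, Y p b * fderiv ℝ φ p (Pi.single b 1) o :=
      fun o => clm_expand _ _ o
    simp only [hx, hy]
    exact algB (Γ' (φ p)) (fun l => fderiv ℝ σ (φ p) (Pi.single l 1) c) (X p) (Y p)
      (fun a m => fderiv ℝ φ p (Pi.single a 1) m) (fun b o => fderiv ℝ φ p (Pi.single b 1) o)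
  have hconn : connOp n Γ' (fun q => fderiv ℝ φ (σ q) (X (σ q)))
      (fun q => fderiv ℝ φ (σ q) (Y (σ q))) (φ p)
      = fderiv ℝ (fun q => fderiv ℝ φ (σ q) (Y (σ q))) (φ p)
          (fderiv ℝ φ (σ (φ p)) (X (σ (φ p))))
        + (fun c' => ∑ a, ∑ b, Γ' (φ p) c' a b * fderiv ℝ φ (σ (φ p)) (X (σ (φ p))) a *
            fderiv ℝ φ (σ (φ p)) (Y (σ (φ p))) b) := rfl
  rw [hconn, map_add, hA, map_add, hinv]
  funext c
  simp only [Pi.add_apply, connOp]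
  rw [hAc c, hW c]
  simp only [add_mul, Finset.sum_add_distrib]
  ring
end
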